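/- For 0 ≤ k ≤ n, S_B[n,k] = Σ_{j=k}^{n} C(n,j) · [2]_q^{j-k} · q^{j-k} · S[j,k]_{q^2}, where S[j,k]_{q^2} denotes the Carlitz q-Stirling number with q replaced by q^2. -/
import Mathlib


open Finset Polynomial

/-- `[m]_q = 1 + q + ... + q^{m-1}`. -/
def qnat {R : Type*} [CommRing R] (q : R) (m : ℕ) : R := ∑ i ∈ Finset.range m, q ^ i

/-- Carlitz's q-Stirling numbers of the second kind in the variable `q²`:
`S[n,k]_{q²} = S[n-1,k-1]_{q²} + [k]_{q²} S[n-1,k]_{q²}`, `S[0,k]_{q²} = δ_{0k}`. -/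
noncomputable def qStirA2 : ℕ → ℕ → Polynomial ℤ
  | 0, 0 => 1
  | 0, _ + 1 => 0
  | n + 1, 0 => qnat (X ^ 2) 0 * qStirA2 n 0
  | n + 1, k + 1 => qStirA2 n k + qnat (X ^ 2) (k + 1) * qStirA2 n (k + 1)

/-- The type B q-Stirling numbers of the second kind:
`S_B[n,k] = S_B[n-1,k-1] + [2k+1]_q S_B[n-1,k]`, `S_B[0,k] = δ_{0k}`. -/
noncomputable def qStirB : ℕ → ℕ → Polynomial ℤ
  | 0, 0 => 1
  | 0, _ + 1 => 0
  | n + 1, 0 => qnat X 1 * qStirB n 0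
  | n + 1, k + 1 => qStirB n k + qnat X (2 * (k + 1) + 1) * qStirB n (k + 1)

lemma qnat_succ {R : Type*} [CommRing R] (q : R) (m : ℕ) :
    qnat q (m + 1) = qnat q m + q ^ m := by simp [qnat, Finset.sum_range_succ]

lemma qnat_odd (m : ℕ) :
    qnat (X : Polynomial ℤ) (2 * m + 1) = 1 + X * (1 + X) * qnat (X ^ 2) m := by
  induction m with
  | zero => simp [qnat]
  | succ m ih =>
    have h : 2 * (m + 1) + 1 = (2 * m + 1) + 1 + 1 := by ring
    rw [h, qnat_succ, qnat_succ, ih, qnat_succ]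
    ring

lemma qStirA2_of_lt : ∀ n k, n < k → qStirA2 n k = 0 := by
  intro n
  induction n with
  | zero =>
    intro k hk
    match k, hk with
    | k + 1, _ => rfl
  | succ n ih =>
    intro k hk
    match k, hk with
    | k + 1, hk =>
      show qStirA2 n k + qnat (X ^ 2) (k + 1) * qStirA2 n (k + 1) = 0
      rw [ih k (by omega), ih (k + 1) (by omega)]
      ring

noncomputable def rhsB (n k : ℕ) : Polynomial ℤ :=
  ∑ j ∈ Finset.Icc k n,
    (Nat.choose n j : Polynomial ℤ) * (1 + X) ^ (j - k) * X ^ (j - k) * qStirA2 j k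

lemma qStirA2_succ_zero (j : ℕ) : qStirA2 (j + 1) 0 = 0 := by
  show qnat (X ^ 2) 0 * qStirA2 j 0 = 0
  simp [qnat]

lemma rhsB_zero (n : ℕ) : rhsB n 0 = 1 := by
  unfold rhsB
  rw [Finset.sum_eq_single 0]
  · simp [qStirA2]
  · intro j _ hj
    match j, hj with
    | j + 1, _ => simp [qStirA2_succ_zero]
  · simp

lemma key : ∀ n k, qStirB n k = rhsB n k := by
  intro n
  induction n with
  | zero =>
    intro k
    cases k with
    | zero => simp [qStirB, rhsB, qStirA2]
    | succ k =>
      show (0 : Polynomial ℤ) = _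
      unfold rhsB
      rw [Finset.Icc_eq_empty (by omega)]
      simp
  | succ n ih =>
    intro k
    cases k with
    | zero =>
      show qnat X 1 * qStirB n 0 = rhsB (n + 1) 0
      rw [rhsB_zero, ih 0, rhsB_zero]
      simp [qnat]
    | succ k =>
      show qStirB n k + qnat X (2 * (k + 1) + 1) * qStirB n (k + 1) = rhsB (n + 1) (k + 1)
      rw [ih k, ih (k + 1), qnat_odd]
      set c : Polynomial ℤ := qnat (X ^ 2) (k + 1) with hc
      -- reindex the target sum
      have reindex : rhsB (n + 1) (k + 1) =
          ∑ i ∈ Finset.Icc k n,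
            (((n.choose i : Polynomial ℤ) + (n.choose (i + 1) : Polynomial ℤ)) *
              (1 + X) ^ (i - k) * X ^ (i - k) * qStirA2 (i + 1) (k + 1)) := by
        unfold rhsB
        rw [← Finset.map_add_right_Icc, Finset.sum_map]
        apply Finset.sum_congr rfl
        intro i hi
        simp only [addRightEmbedding_apply, Nat.succ_sub_succ, Nat.choose_succ_succ]
        push_cast
        ring
      have L3 : (∑ i ∈ Finset.Icc k n,
          (n.choose (i + 1) : Polynomial ℤ) * (1 + X) ^ (i - k) * X ^ (i - k) *
            qStirA2 (i + 1) (k + 1)) = rhsB n (k + 1) := by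
        have h1 : (∑ i ∈ Finset.Icc k n,
            (n.choose (i + 1) : Polynomial ℤ) * (1 + X) ^ (i - k) * X ^ (i - k) *
              qStirA2 (i + 1) (k + 1)) =
            ∑ j ∈ Finset.Icc (k + 1) (n + 1),
              (n.choose j : Polynomial ℤ) * (1 + X) ^ (j - (k + 1)) * X ^ (j - (k + 1)) *
                qStirA2 j (k + 1) := by
          rw [← Finset.map_add_right_Icc, Finset.sum_map]
          apply Finset.sum_congr rfl
          intro i hi
          simp [addRightEmbedding_apply, Nat.succ_sub_succ]
        rw [h1]
        by_cases hkn : k ≤ n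
        · rw [Finset.sum_Icc_succ_top (by omega)]
          simp [rhsB, Nat.choose_succ_self]
        · rw [Finset.Icc_eq_empty (by omega), rhsB, Finset.Icc_eq_empty (by omega)]
      have L2 : (∑ i ∈ Finset.Icc k n,
          (n.choose i : Polynomial ℤ) * (1 + X) ^ (i - k) * X ^ (i - k) *
            qStirA2 i (k + 1)) = X * (1 + X) * rhsB n (k + 1) := by
        have hsub : Finset.Icc (k + 1) n ⊆ Finset.Icc k n :=
          Finset.Icc_subset_Icc_left (by omega)
        have h1 : (∑ i ∈ Finset.Icc k n,
            (n.choose i : Polynomial ℤ) * (1 + X) ^ (i - k) * X ^ (i - k) *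
              qStirA2 i (k + 1)) =
            ∑ i ∈ Finset.Icc (k + 1) n,
              (n.choose i : Polynomial ℤ) * (1 + X) ^ (i - k) * X ^ (i - k) *
                qStirA2 i (k + 1) := by
          symm
          apply Finset.sum_subset hsub
          intro i hi hni
          have hik : i = k := by
            simp only [Finset.mem_Icc] at hi hni
            omega
          subst hik
          rw [qStirA2_of_lt i (i + 1) (by omega)]
          ring
        rw [h1, rhsB, Finset.mul_sum]
        apply Finset.sum_congr rfl
        intro i hi
        have hik : i - k = (i - (k + 1)) + 1 := by
          have := (Finset.mem_Icc.mp hi).1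
          omega
        rw [hik, pow_succ, pow_succ]
        ring
      calc rhsB n k + (1 + X * (1 + X) * c) * rhsB n (k + 1)
          = rhsB n k + c * (X * (1 + X) * rhsB n (k + 1)) + rhsB n (k + 1) := by ring
        _ = (∑ i ∈ Finset.Icc k n,
              (n.choose i : Polynomial ℤ) * (1 + X) ^ (i - k) * X ^ (i - k) * qStirA2 i k)
            + c * (∑ i ∈ Finset.Icc k n,
              (n.choose i : Polynomial ℤ) * (1 + X) ^ (i - k) * X ^ (i - k) *
                qStirA2 i (k + 1))
            + (∑ i ∈ Finset.Icc k n,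
              (n.choose (i + 1) : Polynomial ℤ) * (1 + X) ^ (i - k) * X ^ (i - k) *
                qStirA2 (i + 1) (k + 1)) := by rw [L2, L3]; rfl
        _ = rhsB (n + 1) (k + 1) := by
            rw [reindex, Finset.mul_sum, ← Finset.sum_add_distrib, ← Finset.sum_add_distrib]
            apply Finset.sum_congr rfl
            intro i hi
            have hrec : qStirA2 (i + 1) (k + 1) =
                qStirA2 i k + c * qStirA2 i (k + 1) := rfl
            rw [hrec]
            ring

theorem stmt13 (n k : ℕ) (h : k ≤ n) :
    qStirB n k =
      ∑ j ∈ Finset.Icc k n,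
        (Nat.choose n j : Polynomial ℤ) * (1 + X) ^ (j - k) * X ^ (j - k) * qStirA2 j k := by
  exact key n k
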